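/- arXiv:2511.00547 — 7 statements merged into one kernel-verified Lean document; each statement's English description precedes it below -/
import Mathlib

section
/- Let m, n be positive natural numbers and let a, b be natural numbers with a ≤ n and b ≤ m such that a·m = b·n. Then there exists a matrix M ∈ {0,1}^{m×n} (all entries 0 or 1) such that every row of M sums to a and every column of M sums to b. -/
/-- If `a ≤ n`, `b ≤ m` and `a·m = b·n`, then there exists a binary `m × n` matrix
whose row sums all equal `a` and column sums all equal `b`. -/
theorem nonsquare_bms_exists (m n : ℕ) (hm : 0 < m) (hn : 0 < n)
    (a b : ℕ) (ha : a ≤ n) (hb : b ≤ m) (hab : a * m = b * n) :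
    ∃ M : Fin m → Fin n → ℕ,
      (∀ i j, M i j = 0 ∨ M i j = 1) ∧
      (∀ i, ∑ j, M i j = a) ∧
      (∀ j, ∑ i, M i j = b) := by
  rcases Nat.eq_zero_or_pos a with rfl | hapos
  · have hb0 : b = 0 := by
      have h := hab.symm
      simp only [Nat.zero_mul, Nat.mul_eq_zero] at h
      omega
    subst hb0
    exact ⟨fun _ _ => 0, fun _ _ => Or.inl rfl, by simp, by simp⟩
  refine ⟨fun i j => ((Finset.range (a*m)).filter
      (fun k => k / a = i.val ∧ k % n = j.val)).card, ?_, ?_, ?_⟩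
  · intro i j
    rw [← Nat.le_one_iff_eq_zero_or_eq_one]
    apply Finset.card_le_one.mpr
    intro k₁ h₁ k₂ h₂
    simp only [Finset.mem_filter, Finset.mem_range] at h₁ h₂
    obtain ⟨hk₁, hd₁, hm₁⟩ := h₁
    obtain ⟨hk₂, hd₂, hm₂⟩ := h₂
    have e₁ := Nat.div_add_mod k₁ a
    have e₂ := Nat.div_add_mod k₂ a
    have r₁ := Nat.mod_lt k₁ hapos
    have r₂ := Nat.mod_lt k₂ hapos
    rw [hd₁] at e₁
    rw [hd₂] at e₂
    rcases le_total k₁ k₂ with hle | hle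
    · have hsub : (k₂ - k₁) % n = 0 :=
        Nat.sub_mod_eq_zero_of_mod_eq (hm₂.trans hm₁.symm)
      have hlt : k₂ - k₁ < n := by omega
      have := Nat.mod_eq_of_lt hlt
      omega
    · have hsub : (k₁ - k₂) % n = 0 :=
        Nat.sub_mod_eq_zero_of_mod_eq (hm₁.trans hm₂.symm)
      have hlt : k₁ - k₂ < n := by omega
      have := Nat.mod_eq_of_lt hlt
      omega
  · intro i
    have hfib : ∀ j : Fin n,
        (Finset.range (a*m)).filter (fun k => k / a = i.val ∧ k % n = j.val) =
        ((Finset.range (a*m)).filter (fun k => k / a = i.val)).filter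
          (fun k => (⟨k % n, Nat.mod_lt k hn⟩ : Fin n) = j) := by
      intro j
      rw [Finset.filter_filter]
      apply Finset.filter_congr
      intro k _
      simp [Fin.ext_iff]
    calc ∑ j : Fin n, ((Finset.range (a*m)).filter
            (fun k => k / a = i.val ∧ k % n = j.val)).card
        = ∑ j : Fin n, (((Finset.range (a*m)).filter (fun k => k / a = i.val)).filter
            (fun k => (⟨k % n, Nat.mod_lt k hn⟩ : Fin n) = j)).card :=
          Finset.sum_congr rfl fun j _ => by rw [hfib j]
      _ = ((Finset.range (a*m)).filter (fun k => k / a = i.val)).card :=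
          (Finset.card_eq_sum_card_fiberwise (fun x _ => Finset.mem_univ _)).symm
      _ = a := by
          have hset : (Finset.range (a*m)).filter (fun k => k / a = i.val) =
              Finset.Ico (i.val * a) (i.val * a + a) := by
            ext k
            simp only [Finset.mem_filter, Finset.mem_range, Finset.mem_Ico]
            have e := Nat.div_add_mod k a
            have r := Nat.mod_lt k hapos
            have c1 : a * (k / a) = (k / a) * a := Nat.mul_comm _ _
            have c2 : a * i.val = i.val * a := Nat.mul_comm _ _
            have c3 : a * m = m * a := Nat.mul_comm _ _
            constructor
            · rintro ⟨hk, hdiv⟩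
              rw [hdiv] at e
              omega
            · rintro ⟨h1, h2⟩
              have him : (i.val + 1) * a ≤ m * a :=
                Nat.mul_le_mul_right a i.isLt
              have hexp : (i.val + 1) * a = i.val * a + a := by ring
              constructor
              · omega
              · have hge : i.val ≤ k / a := by
                  rw [Nat.le_div_iff_mul_le hapos]; exact h1
                have hlt : k / a < i.val + 1 := by
                  rw [Nat.div_lt_iff_lt_mul hapos]; omega
                omega
          rw [hset, Nat.card_Ico]
          omega
  · intro j
    have hfib : ∀ i : Fin m,
        (Finset.range (a*m)).filter (fun k => k / a = i.val ∧ k % n = j.val) =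
        ((Finset.range (a*m)).filter (fun k => k % n = j.val)).filter
          (fun k => (⟨k / a % m, Nat.mod_lt _ hm⟩ : Fin m) = i) := by
      intro i
      rw [Finset.filter_filter]
      apply Finset.filter_congr
      intro k hk
      have hk' : k < a * m := Finset.mem_range.mp hk
      have c3 : a * m = m * a := Nat.mul_comm _ _
      have hdm : k / a < m := (Nat.div_lt_iff_lt_mul hapos).mpr (by omega)
      simp [Fin.ext_iff, Nat.mod_eq_of_lt hdm, and_comm]
    calc ∑ i : Fin m, ((Finset.range (a*m)).filter
            (fun k => k / a = i.val ∧ k % n = j.val)).card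
        = ∑ i : Fin m, (((Finset.range (a*m)).filter (fun k => k % n = j.val)).filter
            (fun k => (⟨k / a % m, Nat.mod_lt _ hm⟩ : Fin m) = i)).card :=
          Finset.sum_congr rfl fun i _ => by rw [hfib i]
      _ = ((Finset.range (a*m)).filter (fun k => k % n = j.val)).card :=
          (Finset.card_eq_sum_card_fiberwise (fun x _ => Finset.mem_univ _)).symm
      _ = b := by
          rw [hab]
          have himg : (Finset.range (b*n)).filter (fun k => k % n = j.val) =
              (Finset.range b).image (fun q => q * n + j.val) := by
            ext k
            simp only [Finset.mem_filter, Finset.mem_range, Finset.mem_image]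
            constructor
            · rintro ⟨hk, hmod⟩
              refine ⟨k / n, ?_, ?_⟩
              · have c : b * n = n * b := Nat.mul_comm _ _
                exact (Nat.div_lt_iff_lt_mul hn).mpr (by omega)
              · have e := Nat.div_add_mod k n
                have c : n * (k / n) = (k / n) * n := Nat.mul_comm _ _
                omega
            · rintro ⟨q, hq, rfl⟩
              have hexp : (q + 1) * n = q * n + n := by ring
              have hle : (q + 1) * n ≤ b * n := Nat.mul_le_mul_right n hq
              refine ⟨by have := j.isLt; omega, ?_⟩
              rw [Nat.add_comm, Nat.add_mul_mod_self_right]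
              exact Nat.mod_eq_of_lt j.isLt
          rw [himg, Finset.card_image_of_injective _ ?_, Finset.card_range]
          intro q₁ q₂ h
          simp only [] at h
          have h' : q₁ * n = q₂ * n := by omega
          exact Nat.eq_of_mul_eq_mul_right hn h'
end

section
/- Let m, n be positive natural numbers and let a, b be natural numbers with a ≤ n and b ≤ m. There exists a matrix M ∈ {0,1}^{m×n} (all entries 0 or 1) such that every row of M sums to a and every column of M sums to b if and only if a·m = b·n. -/
open Finset

private lemma bms_sum_range_add (f : ℕ → ℕ) (m n : ℕ) :
    ∑ i ∈ Finset.range (m + n), f i =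
      (∑ i ∈ Finset.range m, f i) + ∑ i ∈ Finset.range n, f (m + i) := by
  induction n with
  | zero => simp
  | succ n ih =>
    rw [← Nat.add_assoc, Finset.sum_range_succ, ih, Finset.sum_range_succ]
    ring

private lemma bms_double_sum (g : ℕ → ℕ) (m a : ℕ) :
    ∑ i ∈ Finset.range m, ∑ k ∈ Finset.range a, g (i * a + k) =
      ∑ t ∈ Finset.range (m * a), g t := by
  induction m with
  | zero => simp
  | succ m ih =>
    rw [Finset.sum_range_succ, ih, Nat.succ_mul, bms_sum_range_add]

private lemma bms_count_mod (b n j : ℕ) (hj : j < n) :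
    ∑ t ∈ Finset.range (b * n), (if t % n = j then 1 else 0) = b := by
  induction b with
  | zero => simp
  | succ b ih =>
    rw [Nat.succ_mul, bms_sum_range_add, ih]
    have : ∀ k ∈ Finset.range n, (if (b * n + k) % n = j then 1 else 0)
        = (if j = k then 1 else 0) := by
      intro k hk
      rw [Finset.mem_range] at hk
      rw [Nat.add_comm, Nat.add_mul_mod_self_right, Nat.mod_eq_of_lt hk]
      by_cases h : k = j <;> simp [h, Ne.symm, eq_comm]
    rw [Finset.sum_congr rfl this, Finset.sum_ite_eq (Finset.range n) j (fun _ => 1),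
      if_pos (Finset.mem_range.mpr hj)]

/-- For `a ≤ n`, `b ≤ m`, a binary `m × n` matrix with all row sums `a` and all
column sums `b` exists if and only if `a·m = b·n`. -/
theorem nonsquare_bms_exists_iff (m n : ℕ) (hm : 0 < m) (hn : 0 < n)
    (a b : ℕ) (ha : a ≤ n) (hb : b ≤ m) :
    (∃ M : Fin m → Fin n → ℕ,
      (∀ i j, M i j = 0 ∨ M i j = 1) ∧
      (∀ i, ∑ j, M i j = a) ∧
      (∀ j, ∑ i, M i j = b)) ↔ a * m = b * n := by
  constructor
  · rintro ⟨M, _, hrow, hcol⟩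
    have h1 : ∑ i : Fin m, ∑ j : Fin n, M i j = a * m := by
      simp [hrow, Finset.sum_const, mul_comm]
    have h2 : ∑ i : Fin m, ∑ j : Fin n, M i j = b * n := by
      rw [Finset.sum_comm]; simp [hcol, Finset.sum_const, mul_comm]
    omega
  · intro hab
    refine ⟨fun i j => ((Finset.range a).filter
      (fun k => (i.val * a + k) % n = j.val)).card, ?_, ?_, ?_⟩
    · intro i j
      dsimp only
      have h1 : ((Finset.range a).filter
          (fun k => (i.val * a + k) % n = j.val)).card ≤ 1 := by
        apply Finset.card_le_one.mpr
        intro k1 hk1 k2 hk2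
        simp only [Finset.mem_filter, Finset.mem_range] at hk1 hk2
        have hmod : k1 % n = k2 % n := by
          have h : (i.val * a + k1) % n = (i.val * a + k2) % n := by
            rw [hk1.2, hk2.2]
          have := (Nat.ModEq.add_left_cancel' (i.val * a) h)
          exact this
        rwa [Nat.mod_eq_of_lt (lt_of_lt_of_le hk1.1 ha),
          Nat.mod_eq_of_lt (lt_of_lt_of_le hk2.1 ha)] at hmod
      omega
    · intro i
      simp only [Finset.card_filter]
      rw [Finset.sum_comm]
      have : ∀ k ∈ Finset.range a,
          (∑ j : Fin n, if (i.val * a + k) % n = j.val then 1 else 0) = 1 := by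
        intro k _
        rw [Fin.sum_univ_eq_sum_range (fun j => if (i.val * a + k) % n = j then 1 else 0) n,
          Finset.sum_ite_eq (Finset.range n) ((i.val * a + k) % n) (fun _ => 1),
          if_pos (Finset.mem_range.mpr (Nat.mod_lt _ hn))]
      rw [Finset.sum_congr rfl this]
      simp
    · intro j
      simp only [Finset.card_filter]
      rw [Fin.sum_univ_eq_sum_range
        (fun i => ∑ k ∈ Finset.range a, if (i * a + k) % n = j.val then 1 else 0) m,
        bms_double_sum (fun t => if t % n = j.val then 1 else 0) m a]
      have hma : m * a = b * n := by rw [mul_comm]; exact hab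
      rw [hma]
      exact bms_count_mod b n j.val j.isLt
end

section
/- Let n be a natural number, k ≤ n, and t < n be natural numbers, and let s : {0, …, n−1} → ℤ be a function such that k + t − n ≤ s(i) ≤ k for every i and the sum of s(i) over all i equals t·k. Then there exists a set E ⊆ {0, …, n−1} of cardinality exactly k such that: (1) every index i with s(i) = k + t − n belongs to E; (2) no index i with s(i) = k belongs to E; and (3) the updated function s' defined by s'(i) = s(i) + 1 if i ∈ E and s'(i) = s(i) otherwise satisfies k + (t+1) − n ≤ s'(i) ≤ k for every i, and the sum of s'(i) over all i equals (t+1)·k. -/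
/-!
Let `L` and `U` be the rows sitting at the lower bound `k + t - n` and at the upper bound `k`.
Since every row lies between the bounds, whose gap is `n - t > 0`, comparing `∑ s = t k` with
the extreme sums gives `#L (n - t) ≤ (n - t) k` and `#U (n - t) ≤ (n - t)(n - k)`, so
`#L ≤ k ≤ n - #U`. Hence some `k`-set `E` contains `L` and avoids `U`; incrementing the rows
of `E` keeps every row within the new bounds and adds exactly `k` to the total.
-/

open Finset

section CountingExtremes

variable {ι R : Type*} [CommRing R] [LinearOrder R] [IsStrictOrderedRing R]
  (s : Finset ι) (f : ι → R) (a b : R)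

theorem card_filter_eq_mul_sub_le_of_le (hf : ∀ i ∈ s, f i ≤ b) :
    #(s.filter (f · = a)) * (b - a) ≤ #s * b - ∑ i ∈ s, f i := by
  calc #(s.filter (f · = a)) * (b - a) = ∑ i ∈ s.filter (f · = a), (b - f i) := by
        rw [sum_congr rfl fun i hi => by rw [(mem_filter.mp hi).2], sum_const, nsmul_eq_mul]
    _ ≤ ∑ i ∈ s, (b - f i) :=
        sum_le_sum_of_subset_of_nonneg (filter_subset _ _)
          fun i hi _ => sub_nonneg.mpr (hf i hi)
    _ = #s * b - ∑ i ∈ s, f i := by rw [sum_sub_distrib, sum_const, nsmul_eq_mul]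

theorem card_filter_eq_mul_sub_le_of_ge (hf : ∀ i ∈ s, a ≤ f i) :
    #(s.filter (f · = b)) * (b - a) ≤ ∑ i ∈ s, f i - #s * a := by
  calc #(s.filter (f · = b)) * (b - a) = ∑ i ∈ s.filter (f · = b), (f i - a) := by
        rw [sum_congr rfl fun i hi => by rw [(mem_filter.mp hi).2], sum_const, nsmul_eq_mul]
    _ ≤ ∑ i ∈ s, (f i - a) :=
        sum_le_sum_of_subset_of_nonneg (filter_subset _ _)
          fun i hi _ => sub_nonneg.mpr (hf i hi)
    _ = ∑ i ∈ s, f i - #s * a := by rw [sum_sub_distrib, sum_const, nsmul_eq_mul]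

end CountingExtremes

theorem Fintype.sum_ite_mem_add_one {ι R : Type*} [Fintype ι] [DecidableEq ι]
    [AddCommMonoidWithOne R] (f : ι → R) (E : Finset ι) :
    ∑ i, (if i ∈ E then f i + 1 else f i) = ∑ i, f i + #E := by
  have : ∀ i, (if i ∈ E then f i + 1 else f i) = f i + if i ∈ E then 1 else 0 := fun i => by
    split_ifs <;> simp
  simp only [this, sum_add_distrib, Fintype.sum_ite_mem, sum_const, nsmul_one]

theorem bms_inductive_step_general (n k t : ℕ) (ht : t < n)
    (s : Fin n → ℤ)
    (hlb : ∀ i, (k : ℤ) + t - n ≤ s i)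
    (hub : ∀ i, s i ≤ (k : ℤ))
    (hsum : ∑ i, s i = (t : ℤ) * k) :
    ∃ E : Finset (Fin n),
      E.card = k ∧
      (∀ i, s i = (k : ℤ) + t - n → i ∈ E) ∧
      (∀ i, s i = (k : ℤ) → i ∉ E) ∧
      (∀ i, (k : ℤ) + (t + 1 : ℕ) - n ≤ (if i ∈ E then s i + 1 else s i) ∧
            (if i ∈ E then s i + 1 else s i) ≤ (k : ℤ)) ∧
      (∑ i, (if i ∈ E then s i + 1 else s i)) = ((t : ℤ) + 1) * k := by
  classical
  set L := univ.filter (s · = (k : ℤ) + t - n)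
  set U := univ.filter (s · = (k : ℤ))
  have hgap : (0 : ℤ) < k - (k + t - n) := by omega
  have hL := card_filter_eq_mul_sub_le_of_le univ s ((k : ℤ) + t - n) k fun i _ => hub i
  have hU := card_filter_eq_mul_sub_le_of_ge univ s ((k : ℤ) + t - n) k fun i _ => hlb i
  rw [card_univ, Fintype.card_fin, hsum] at hL hU
  have hLk : #L ≤ k := by
    have : (#L : ℤ) ≤ k := le_of_mul_le_mul_right (by linarith) hgap
    exact_mod_cast this
  have hkU : k ≤ #Uᶜ := by
    have : (#U : ℤ) ≤ n - k := le_of_mul_le_mul_right (by linarith) hgap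
    rw [card_compl, Fintype.card_fin]
    omega
  have hLU : L ⊆ Uᶜ := fun i hi => by
    simp only [L, U, mem_compl, mem_filter, mem_univ, true_and] at hi ⊢
    omega
  obtain ⟨E, hLE, hEU, hE⟩ := exists_subsuperset_card_eq hLU hLk hkU
  have hL_mem : ∀ i, s i = (k : ℤ) + t - n → i ∈ E := fun i hi => hLE (by simp [L, hi])
  have hU_mem : ∀ i, s i = (k : ℤ) → i ∉ E := fun i hi hiE => by
    simpa [U, hi] using hEU hiE
  refine ⟨E, hE, hL_mem, hU_mem, fun i => ?_, ?_⟩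
  · have := hlb i; have := hub i
    push_cast
    split_ifs with hi
    · have := mt (hU_mem i) (not_not.mpr hi)
      omega
    · have := mt (hL_mem i) hi
      omega
  · rw [Fintype.sum_ite_mem_add_one, hsum, hE]
    ring

/-- Inductive step of the BMS generation algorithm: given partial row sums `s`
with `k + t - n ≤ s i ≤ k` and total `t·k`, there is a set `E` of exactly `k`
indices containing all indices at the lower bound, none at the upper bound, and
such that incrementing `s` on `E` preserves the invariant for step `t + 1`. -/
theorem bms_inductive_step (n k t : ℕ) (hk : k ≤ n) (ht : t < n)
    (s : Fin n → ℤ)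
    (hlb : ∀ i, (k : ℤ) + t - n ≤ s i)
    (hub : ∀ i, s i ≤ (k : ℤ))
    (hsum : ∑ i, s i = (t : ℤ) * k) :
    ∃ E : Finset (Fin n),
      E.card = k ∧
      (∀ i, s i = (k : ℤ) + t - n → i ∈ E) ∧
      (∀ i, s i = (k : ℤ) → i ∉ E) ∧
      (∀ i, (k : ℤ) + (t + 1 : ℕ) - n ≤ (if i ∈ E then s i + 1 else s i) ∧
            (if i ∈ E then s i + 1 else s i) ≤ (k : ℤ)) ∧
      (∑ i, (if i ∈ E then s i + 1 else s i)) = ((t : ℤ) + 1) * k :=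
  bms_inductive_step_general n k t ht s hlb hub hsum
end

section
/- Let m, n be positive natural numbers, let a ≤ n, b ≤ m, and t < n be natural numbers with a·m = b·n, and let s : {0, …, m−1} → ℤ be a function such that a + t − n ≤ s(i) ≤ a for every i and the sum of s(i) over all i equals t·b. Then the number of indices i with s(i) = a + t − n is at most b. -/
/-!
Each row with `s i = a + t - n` falls short of the bound `a` by `n - t`, and no row exceeds it,
so `#A₁ · (n - t) ≤ m·a - t·b = (n - t)·b`.
-/

open Finset

theorem Finset.sum_add_card_filter_eq_mul_le {ι R : Type*} [CommRing R] [PartialOrder R]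
    [IsOrderedRing R] [DecidableEq R] (s : Finset ι) (f : ι → R) (lo hi : R)
    (hf : ∀ i ∈ s, f i ≤ hi) :
    ∑ i ∈ s, f i + #(s.filter (f · = lo)) * (hi - lo) ≤ #s * hi := by
  have hlo : ∑ i ∈ s.filter (f · = lo), f i = #(s.filter (f · = lo)) * lo := by
    rw [sum_congr rfl fun i hi => (mem_filter.mp hi).2, sum_const, nsmul_eq_mul]
  have hrest : ∑ i ∈ s.filter (¬f · = lo), f i ≤ #(s.filter (¬f · = lo)) * hi := by
    rw [← nsmul_eq_mul, ← sum_const]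
    exact sum_le_sum fun i hi => hf i (mem_filter.mp hi).1
  have hcard : (#s : R) = #(s.filter (f · = lo)) + #(s.filter (¬f · = lo)) := by
    rw [← Nat.cast_add, card_filter_add_card_filter_not]
  rw [← sum_filter_add_sum_filter_not s (f · = lo), hlo, hcard]
  linear_combination hrest

theorem nonsquare_card_A1_le_general (m n : ℕ)
    (a b t : ℕ) (ht : t < n)
    (hab : a * m = b * n)
    (s : Fin m → ℤ)
    (hub : ∀ i, s i ≤ (a : ℤ))
    (hsum : ∑ i, s i = (t : ℤ) * b) :
    (Finset.univ.filter (fun i : Fin m => s i = (a : ℤ) + t - n)).card ≤ b := by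
  have hshortfall := sum_add_card_filter_eq_mul_le univ s ((a : ℤ) + t - n) a fun i _ => hub i
  rw [hsum, card_univ, Fintype.card_fin] at hshortfall
  have habz : (a : ℤ) * m = b * n := by exact_mod_cast hab
  have hgap : (0 : ℤ) < n - t := by omega
  have hscaled : (#(univ.filter fun i => s i = (a : ℤ) + t - n) : ℤ) * (n - t) ≤ b * (n - t) := by
    linear_combination hshortfall + habz
  exact_mod_cast le_of_mul_le_mul_right hscaled hgap

/-- Non-square case: if `s : Fin m → ℤ` satisfies `a + t - n ≤ s i ≤ a` for all `i`
and `∑ i, s i = t·b`, with `a·m = b·n`, then the number of indices with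
`s i = a + t - n` is at most `b`. -/
theorem nonsquare_card_A1_le (m n : ℕ) (hm : 0 < m) (hn : 0 < n)
    (a b t : ℕ) (ha : a ≤ n) (hb : b ≤ m) (ht : t < n)
    (hab : a * m = b * n)
    (s : Fin m → ℤ)
    (hlb : ∀ i, (a : ℤ) + t - n ≤ s i)
    (hub : ∀ i, s i ≤ (a : ℤ))
    (hsum : ∑ i, s i = (t : ℤ) * b) :
    (Finset.univ.filter (fun i : Fin m => s i = (a : ℤ) + t - n)).card ≤ b :=
  nonsquare_card_A1_le_general m n a b t ht hab s hub hsum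
end

section
/- Let m, n be positive natural numbers, let a ≤ n, b ≤ m, and t < n be natural numbers with a·m = b·n, and let s : {0, …, m−1} → ℤ be a function such that a + t − n ≤ s(i) ≤ a for every i and the sum of s(i) over all i equals t·b. Then the number of indices i with s(i) = a is at most m − b. -/
/-!
Summing the lower bounds: the `k` indices with `s i = a` contribute `k * a` and the other
`m - k` at least `a + t - n` each, so `k * a + (m - k) * (a + t - n) ≤ t * b`. Using `a * m = b * n`,
the left side minus the right side is `(n - t) * (k + b - m)`, and `n - t > 0` forces `k ≤ m - b`.
-/

open Finset

theorem card_filter_eq_nsmul_add_card_filter_ne_nsmul_le_sum {ι R : Type*} [Fintype ι]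
    [AddCommMonoid R] [PartialOrder R] [IsOrderedAddMonoid R] [DecidableEq R]
    (s : ι → R) (c L : R) (hL : ∀ i, L ≤ s i) :
    #{i | s i = c} • c + #{i | s i ≠ c} • L ≤ ∑ i, s i := by
  rw [← sum_filter_add_sum_filter_not univ (fun i => s i = c)]
  gcongr
  · rw [sum_congr rfl fun i hi => (mem_filter.mp hi).2, sum_const]
  · exact card_nsmul_le_sum _ _ _ fun i _ => hL i

theorem le_of_mul_add_mul_le {k l a b t n : ℤ} (ht : t < n) (hab : a * (k + l) = b * n)
    (h : k * a + l * (a + t - n) ≤ t * b) : b ≤ l := by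
  have hfactor : (n - t) * b - (n - t) * l = k * a + l * (a + t - n) - t * b := by
    linear_combination -hab
  exact le_of_mul_le_mul_left (by linarith) (sub_pos.mpr ht)

theorem nonsquare_card_A3_le_general (m n : ℕ)
    (a b t : ℕ) (ht : t < n)
    (hab : a * m = b * n)
    (s : Fin m → ℤ)
    (hlb : ∀ i, (a : ℤ) + t - n ≤ s i)
    (hsum : ∑ i, s i = (t : ℤ) * b) :
    (Finset.univ.filter (fun i : Fin m => s i = (a : ℤ))).card ≤ m - b := by
  have hbound := card_filter_eq_nsmul_add_card_filter_ne_nsmul_le_sum s a _ hlb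
  have hcard : #{i | s i = a} + #{i | s i ≠ a} = m := by
    simpa using card_filter_add_card_filter_not (s := univ) (fun i : Fin m => s i = a)
  simp only [nsmul_eq_mul, hsum] at hbound
  have hb_le := le_of_mul_add_mul_le (b := b) (Int.ofNat_lt.mpr ht)
    (by rw [← Nat.cast_add, hcard]; exact_mod_cast hab) hbound
  omega

/-- Non-square case: if `s : Fin m → ℤ` satisfies `a + t - n ≤ s i ≤ a` for all `i`
and `∑ i, s i = t·b`, with `a·m = b·n`, then the number of indices with
`s i = a` is at most `m - b`. -/
theorem nonsquare_card_A3_le (m n : ℕ) (hm : 0 < m) (hn : 0 < n)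
    (a b t : ℕ) (ha : a ≤ n) (hb : b ≤ m) (ht : t < n)
    (hab : a * m = b * n)
    (s : Fin m → ℤ)
    (hlb : ∀ i, (a : ℤ) + t - n ≤ s i)
    (hub : ∀ i, s i ≤ (a : ℤ))
    (hsum : ∑ i, s i = (t : ℤ) * b) :
    (Finset.univ.filter (fun i : Fin m => s i = (a : ℤ))).card ≤ m - b :=
  nonsquare_card_A3_le_general m n a b t ht hab s hlb hsum
end

section
/- Let m, n be positive natural numbers, let a ≤ n, b ≤ m, and t < n be natural numbers with a·m = b·n, and let s : {0, …, m−1} → ℤ be a function such that a + t − n ≤ s(i) ≤ a for every i and the sum of s(i) over all i equals t·b. Then there exists a set E ⊆ {0, …, m−1} of cardinality exactly b such that: (1) every index i with s(i) = a + t − n belongs to E; (2) no index i with s(i) = a belongs to E; and (3) the updated function s' defined by s'(i) = s(i) + 1 if i ∈ E and s'(i) = s(i) otherwise satisfies a + (t+1) − n ≤ s'(i) ≤ a for every i, and the sum of s'(i) over all i equals (t+1)·b. -/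
/-- Inductive step of the non-square BMS generation algorithm: given partial row
sums `s` with `a + t - n ≤ s i ≤ a` and total `t·b`, there is a set `E` of
exactly `b` indices containing all indices at the lower bound, none at the
upper bound, and such that incrementing `s` on `E` preserves the invariant. -/
theorem nonsquare_bms_inductive_step (m n : ℕ) (hm : 0 < m) (hn : 0 < n)
    (a b t : ℕ) (ha : a ≤ n) (hb : b ≤ m) (ht : t < n)
    (hab : a * m = b * n)
    (s : Fin m → ℤ)
    (hlb : ∀ i, (a : ℤ) + t - n ≤ s i)
    (hub : ∀ i, s i ≤ (a : ℤ))
    (hsum : ∑ i, s i = (t : ℤ) * b) :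
    ∃ E : Finset (Fin m),
      E.card = b ∧
      (∀ i, s i = (a : ℤ) + t - n → i ∈ E) ∧
      (∀ i, s i = (a : ℤ) → i ∉ E) ∧
      (∀ i, (a : ℤ) + (t + 1 : ℕ) - n ≤ (if i ∈ E then s i + 1 else s i) ∧
            (if i ∈ E then s i + 1 else s i) ≤ (a : ℤ)) ∧
      (∑ i, (if i ∈ E then s i + 1 else s i)) = ((t : ℤ) + 1) * b := by
  classical
  have hab' : (a : ℤ) * m = (b : ℤ) * n := by exact_mod_cast hab
  set L : Finset (Fin m) := Finset.univ.filter (fun i => s i = (a : ℤ) + t - n) with hLdef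
  set U : Finset (Fin m) := Finset.univ.filter (fun i => s i = (a : ℤ)) with hUdef
  have hLU : L ⊆ Uᶜ := by
    intro i hi
    simp only [hLdef, hUdef, Finset.mem_compl, Finset.mem_filter, Finset.mem_univ,
      true_and] at hi ⊢
    omega
  have hLm : L.card ≤ m := by
    simpa using Finset.card_le_card (Finset.subset_univ L)
  have hUm : U.card ≤ m := by
    simpa using Finset.card_le_card (Finset.subset_univ U)
  -- L.card ≤ b
  have hLb : L.card ≤ b := by
    have h1 : ∑ i ∈ L, s i = L.card • ((a : ℤ) + t - n) :=
      Finset.sum_eq_card_nsmul (fun i hi => by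
        simpa [hLdef] using (Finset.mem_filter.mp hi).2)
    have h2 : ∑ i ∈ Lᶜ, s i ≤ Lᶜ.card • (a : ℤ) :=
      Finset.sum_le_card_nsmul _ _ _ (fun i _ => hub i)
    have h3 : ∑ i ∈ L, s i + ∑ i ∈ Lᶜ, s i = ∑ i, s i := Finset.sum_add_sum_compl _ _
    have hcc : Lᶜ.card = m - L.card := by simp [Finset.card_compl]
    rw [hsum, h1] at h3
    rw [hcc] at h2
    have key : (t : ℤ) * b ≤ (L.card : ℤ) * ((a : ℤ) + t - n) + ((m : ℤ) - L.card) * a := by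
      have : ((m - L.card : ℕ) : ℤ) = (m : ℤ) - L.card := by
        have := hLm; omega
      rw [nsmul_eq_mul] at h1 h3
      rw [nsmul_eq_mul, this] at h2
      linarith
    have hx : (0 : ℤ) ≤ L.card := Int.natCast_nonneg _
    have htn : (t : ℤ) + 1 ≤ n := by exact_mod_cast ht
    have : (L.card : ℤ) ≤ b := by nlinarith [key, hab', htn, hx]
    exact_mod_cast this
  -- b ≤ m - U.card
  have hUb : b ≤ m - U.card := by
    have h1 : ∑ i ∈ U, s i = U.card • (a : ℤ) :=
      Finset.sum_eq_card_nsmul (fun i hi => by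
        simpa [hUdef] using (Finset.mem_filter.mp hi).2)
    have h2 : Uᶜ.card • ((a : ℤ) + t - n) ≤ ∑ i ∈ Uᶜ, s i :=
      Finset.card_nsmul_le_sum _ _ _ (fun i _ => hlb i)
    have h3 : ∑ i ∈ U, s i + ∑ i ∈ Uᶜ, s i = ∑ i, s i := Finset.sum_add_sum_compl _ _
    have hcc : Uᶜ.card = m - U.card := by simp [Finset.card_compl]
    rw [hsum, h1] at h3
    rw [hcc] at h2
    have key : (U.card : ℤ) * a + ((m : ℤ) - U.card) * ((a : ℤ) + t - n) ≤ (t : ℤ) * b := by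
      have : ((m - U.card : ℕ) : ℤ) = (m : ℤ) - U.card := by
        have := hUm; omega
      rw [nsmul_eq_mul] at h1 h3
      rw [nsmul_eq_mul, this] at h2
      linarith
    have hx : (0 : ℤ) ≤ U.card := Int.natCast_nonneg _
    have htn : (t : ℤ) + 1 ≤ n := by exact_mod_cast ht
    have hUcard : (U.card : ℤ) ≤ (m : ℤ) - b := by nlinarith [key, hab', htn, hx]
    have hbm : (b : ℤ) ≤ m := by exact_mod_cast hb
    omega
  have hbU : b ≤ Uᶜ.card := by
    have : Uᶜ.card = m - U.card := by simp [Finset.card_compl]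
    omega
  obtain ⟨E, hLE, hEU, hEcard⟩ := Finset.exists_subsuperset_card_eq hLU hLb hbU
  refine ⟨E, hEcard, ?_, ?_, ?_, ?_⟩
  · intro i hi
    exact hLE (by simp [hLdef, hi])
  · intro i hi hiE
    have := hEU hiE
    simp [hUdef, hi] at this
  · intro i
    by_cases hi : i ∈ E
    · have hiU : i ∉ U := by simpa using hEU hi
      have hne : s i ≠ (a : ℤ) := by
        intro h; exact hiU (by simp [hUdef, h])
      have := hub i
      have := hlb i
      simp only [hi, if_true]
      push_cast
      omega
    · have hiL : i ∉ L := fun h => hi (hLE h)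
      have hne : s i ≠ (a : ℤ) + t - n := by
        intro h; exact hiL (by simp [hLdef, h])
      have := hub i
      have := hlb i
      simp only [hi, if_false]
      push_cast
      omega
  · have : ∀ i, (if i ∈ E then s i + 1 else s i) = s i + (if i ∈ E then (1 : ℤ) else 0) := by
      intro i; split_ifs <;> simp
    rw [Finset.sum_congr rfl (fun i _ => this i), Finset.sum_add_distrib, hsum,
      Finset.sum_ite_mem, Finset.univ_inter, Finset.sum_const, hEcard]
    push_cast
    ring
end

section
/- Let m, n be positive natural numbers, let q = gcd(m, n), m' = m / q, n' = n / q, and let a ≤ n and b ≤ m be natural numbers. Then the pair (a, b) satisfies: there exists a matrix M ∈ {0,1}^{m×n} (all entries 0 or 1) with every row summing to a and every column summing to b, if and only if (a, b) belongs to the set { (q'·n', q'·m') : q' a natural number with 0 ≤ q' ≤ q }. -/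
/-!
Counting the ones of the matrix by rows and by columns gives `m * a = n * b`, hence
`m' * a = n' * b` with `m'` and `n'` coprime; so `a = q' * n'` and `b = q' * m'`, and `a ≤ n`
forces `q' ≤ q`. Conversely, put a one at `(i, j)` exactly when `(i + j) % q < q'`: along a
row (a column) the residue `(i + j) % q` runs `n'` (`m'`) times through all residues mod `q`,
and each time it meets exactly `q'` residues below `q'`.
-/

open Finset

namespace Function.Periodic

variable {M : Type*} {f : ℕ → M} {q : ℕ}

theorem sum_range_mul [AddCommMonoid M] (hf : Periodic f q) (k : ℕ) :
    ∑ x ∈ range (k * q), f x = k • ∑ x ∈ range q, f x := by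
  induction k with
  | zero => simp
  | succ k ih =>
    rw [Nat.succ_mul, sum_range_add, ih, succ_nsmul]
    congr 1
    refine sum_congr rfl fun x _ => ?_
    rw [add_comm, ← Nat.cast_id k, hf.nat_mul k x]

theorem sum_range_comp_add [AddCancelCommMonoid M] (hf : Periodic f q) (c : ℕ) :
    ∑ x ∈ range q, f (x + c) = ∑ x ∈ range q, f x := by
  induction c with
  | zero => rfl
  | succ c ih =>
    have hshift := sum_range_succ' (fun x => f (x + c)) q
    rw [sum_range_succ, add_comm q c, hf c, zero_add] at hshift
    rw [← ih, ← add_left_inj (f c), hshift]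
    simp only [add_right_comm _ 1 c, add_assoc]

end Function.Periodic

theorem Nat.sum_range_mul_ite_add_mod_lt {q r : ℕ} (hr : r ≤ q) (c k : ℕ) :
    ∑ x ∈ range (k * q), (if (x + c) % q < r then 1 else 0) = k * r := by
  have hperiodic : Function.Periodic (fun x => if x % q < r then 1 else 0) q := by
    intro x; simp only [add_mod_right]
  have hfilter : {x ∈ range q | x % q < r} = range r := by
    ext x
    simp only [mem_filter, mem_range]
    constructor
    · rintro ⟨hxq, hxr⟩; rwa [mod_eq_of_lt hxq] at hxr
    · intro hxr; exact ⟨hxr.trans_le hr, (mod_le x q).trans_lt hxr⟩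
  rw [(hperiodic.add_const c).sum_range_mul, hperiodic.sum_range_comp_add, sum_boole, hfilter,
    card_range, smul_eq_mul, cast_id]

theorem Fintype.card_nsmul_eq_card_nsmul_of_sum_eq {ι κ R : Type*} [Fintype ι] [Fintype κ]
    [AddCommMonoid R] {M : ι → κ → R} {a b : R} (hrow : ∀ i, ∑ j, M i j = a)
    (hcol : ∀ j, ∑ i, M i j = b) : card ι • a = card κ • b := by
  calc card ι • a = ∑ i, ∑ j, M i j := by simp [hrow]
    _ = ∑ j, ∑ i, M i j := sum_comm
    _ = card κ • b := by simp [hcol]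

theorem Nat.exists_le_gcd_of_mul_eq_mul {m n a b : ℕ} (hn : 0 < n) (ha : a ≤ n)
    (h : m * a = n * b) :
    ∃ q' ≤ m.gcd n, a = q' * (n / m.gcd n) ∧ b = q' * (m / m.gcd n) := by
  set q := m.gcd n
  have hq : 0 < q := gcd_pos_of_pos_right m hn
  have hn' : 0 < n / q := div_pos (le_of_dvd hn (gcd_dvd_right m n)) hq
  have hmq : q * (m / q) = m := Nat.mul_div_cancel' (gcd_dvd_left m n)
  have hnq : q * (n / q) = n := Nat.mul_div_cancel' (gcd_dvd_right m n)
  have hreduced : m / q * a = n / q * b := by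
    apply Nat.eq_of_mul_eq_mul_left hq
    rw [← mul_assoc, ← mul_assoc, hmq, hnq, h]
  obtain ⟨q', rfl⟩ : n / q ∣ a :=
    (coprime_div_gcd_div_gcd hq).symm.dvd_of_dvd_mul_left ⟨b, hreduced⟩
  refine ⟨q', ?_, mul_comm _ _, ?_⟩
  · refine le_of_mul_le_mul_right ?_ hn'
    rwa [hnq, mul_comm]
  · refine (Nat.eq_of_mul_eq_mul_left hn' ?_).symm
    rw [← hreduced]
    ring

def cyclicBandMatrix (m n q r : ℕ) (i : Fin m) (j : Fin n) : ℕ :=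
  if (i + j : ℕ) % q < r then 1 else 0

section cyclicBandMatrix

variable {m n q r : ℕ}

theorem cyclicBandMatrix_eq_zero_or_eq_one (i : Fin m) (j : Fin n) :
    cyclicBandMatrix m n q r i j = 0 ∨ cyclicBandMatrix m n q r i j = 1 := by
  unfold cyclicBandMatrix; split_ifs <;> simp

theorem sum_cyclicBandMatrix_row (hr : r ≤ q) {k : ℕ} (hn : n = k * q) (i : Fin m) :
    ∑ j, cyclicBandMatrix m n q r i j = r * k := by
  subst hn
  simp only [cyclicBandMatrix, add_comm (i : ℕ)]
  rw [Fin.sum_univ_eq_sum_range (fun x => if (x + i) % q < r then 1 else 0),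
    Nat.sum_range_mul_ite_add_mod_lt hr, mul_comm]

theorem sum_cyclicBandMatrix_col (hr : r ≤ q) {k : ℕ} (hm : m = k * q) (j : Fin n) :
    ∑ i, cyclicBandMatrix m n q r i j = r * k := by
  subst hm
  unfold cyclicBandMatrix
  rw [Fin.sum_univ_eq_sum_range (fun x => if (x + j) % q < r then 1 else 0),
    Nat.sum_range_mul_ite_add_mod_lt hr, mul_comm]

end cyclicBandMatrix

theorem bms_margins_iff_general (m n : ℕ) (hn : 0 < n)
    (a b : ℕ) (ha : a ≤ n) :
    (∃ M : Fin m → Fin n → ℕ,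
      (∀ i j, M i j = 0 ∨ M i j = 1) ∧
      (∀ i, ∑ j, M i j = a) ∧
      (∀ j, ∑ i, M i j = b)) ↔
    (a, b) ∈ {p : ℕ × ℕ | ∃ q' ≤ Nat.gcd m n,
      p = (q' * (n / Nat.gcd m n), q' * (m / Nat.gcd m n))} := by
  constructor
  · rintro ⟨M, -, hrow, hcol⟩
    have hcount : m * a = n * b := by
      simpa using Fintype.card_nsmul_eq_card_nsmul_of_sum_eq hrow hcol
    obtain ⟨q', hq', rfl, rfl⟩ := Nat.exists_le_gcd_of_mul_eq_mul hn ha hcount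
    exact ⟨q', hq', rfl⟩
  · rintro ⟨q', hq', hab⟩
    obtain ⟨rfl, rfl⟩ := Prod.ext_iff.mp hab
    exact ⟨cyclicBandMatrix m n (m.gcd n) q', cyclicBandMatrix_eq_zero_or_eq_one,
      sum_cyclicBandMatrix_row hq' (Nat.div_mul_cancel (Nat.gcd_dvd_right m n)).symm,
      sum_cyclicBandMatrix_col hq' (Nat.div_mul_cancel (Nat.gcd_dvd_left m n)).symm⟩

/-- With `q = gcd(m, n)`, `m' = m / q`, `n' = n / q`: a binary `m × n` matrix with
all row sums `a` and all column sums `b` exists if and only if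
`(a, b) ∈ {(q'·n', q'·m') : 0 ≤ q' ≤ q}`. -/
theorem bms_margins_iff (m n : ℕ) (hm : 0 < m) (hn : 0 < n)
    (a b : ℕ) (ha : a ≤ n) (hb : b ≤ m) :
    (∃ M : Fin m → Fin n → ℕ,
      (∀ i j, M i j = 0 ∨ M i j = 1) ∧
      (∀ i, ∑ j, M i j = a) ∧
      (∀ j, ∑ i, M i j = b)) ↔
    (a, b) ∈ {p : ℕ × ℕ | ∃ q' ≤ Nat.gcd m n,
      p = (q' * (n / Nat.gcd m n), q' * (m / Nat.gcd m n))} :=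
  bms_margins_iff_general m n hn a b ha
end
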